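/- If a Lévy G-space (G, X) admits a uniformly continuous G-equivariant map into a compact metric G-space K, then K has a G-fixed point. -/

import Mathlib

open MeasureTheory Metric Filter Pointwise

/-- The concentration function of an mm-space. -/
noncomputable def concFn {X : Type*} [PseudoMetricSpace X] [MeasurableSpace X]
    (μ : Measure X) (ε : ℝ) : ℝ :=
  if ε ≤ 0 then 1 / 2
  else 1 - sInf {r : ℝ | ∃ A : Set X, MeasurableSet A ∧ 1 / 2 ≤ (μ A).toReal ∧
    r = (μ (thickening ε A)).toReal}

/-- Basic concentration bound: any half-measure set has large thickening. -/
lemma concFn_bound {X : Type*} [PseudoMetricSpace X] [MeasurableSpace X]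
    (μ : Measure X) {ε : ℝ} (hε : 0 < ε) {A : Set X} (hA : MeasurableSet A)
    (h : 1 / 2 ≤ (μ A).toReal) :
    1 - concFn μ ε ≤ (μ (thickening ε A)).toReal := by
  rw [concFn, if_neg (not_le.mpr hε)]
  have hb : BddBelow {r : ℝ | ∃ A : Set X, MeasurableSet A ∧ 1 / 2 ≤ (μ A).toReal ∧
      r = (μ (thickening ε A)).toReal} := by
    refine ⟨0, ?_⟩
    rintro r ⟨B, -, -, rfl⟩
    exact ENNReal.toReal_nonneg
  have := csInf_le hb ⟨A, hA, h, rfl⟩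
  linarith

/-- If a Lévy `G`-space `X` admits a uniformly continuous `G`-equivariant map into a
compact metric `G`-space `K`, then `K` has a `G`-fixed point. -/
theorem fixed_point_of_levy {G X K : Type*} [Group G] [TopologicalSpace G]
    [IsTopologicalGroup G] [MetricSpace X] [MeasurableSpace X] [BorelSpace X]
    [MulAction G X] [ContinuousSMul G X]
    [MetricSpace K] [CompactSpace K] [MulAction G K] [ContinuousSMul G K]
    (huc : ∀ g : G, UniformContinuous (fun x : X => g • x))
    (H : ℕ → Subgroup G) (hmono : Monotone H)
    (hdense : Dense (⋃ n, (H n : Set G)))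
    (μ : ℕ → Measure X) (hprob : ∀ n, IsProbabilityMeasure (μ n))
    (hinv : ∀ n, ∀ g ∈ H n, ∀ A : Set X, MeasurableSet A → μ n (g • A) = μ n A)
    (hlevy : ∀ ε > (0 : ℝ), Tendsto (fun n => concFn (μ n) ε) atTop (nhds 0))
    (i : X → K) (hi : UniformContinuous i)
    (hequiv : ∀ (g : G) (x : X), i (g • x) = g • i x) :
    ∃ κ : K, ∀ g : G, g • κ = κ := by
  classical
  letI : MeasurableSpace K := borel K
  haveI : BorelSpace K := ⟨rfl⟩
  haveI := hprob
  have him : Measurable i := hi.continuous.measurable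
  set ν : ℕ → Measure K := fun n => (μ n).map i with hνdef
  haveI hνprob : ∀ n, IsProbabilityMeasure (ν n) :=
    fun n => Measure.isProbabilityMeasure_map him.aemeasurable
  have hX : Nonempty X := by
    by_contra h
    have h0 : (μ 0) Set.univ = 1 := (hprob 0).measure_univ
    rw [Set.univ_eq_empty_iff.mpr (not_nonempty_iff.mp h), measure_empty] at h0
    exact zero_ne_one h0
  have hK : Nonempty K := ⟨i (Classical.arbitrary X)⟩
  -- complement formula in `toReal`
  have hcompl : ∀ n (S : Set K), MeasurableSet S →
      ((ν n) Sᶜ).toReal = 1 - ((ν n) S).toReal := by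
    intro n S hS
    rw [prob_compl_eq_one_sub hS,
      ENNReal.toReal_sub_of_le prob_le_one ENNReal.one_ne_top, ENNReal.toReal_one]
  have hle1 : ∀ n (S : Set K), ((ν n) S).toReal ≤ 1 := by
    intro n S
    have := prob_le_one (μ := ν n) (s := S)
    simpa using ENNReal.toReal_mono ENNReal.one_ne_top this
  -- invariance of `ν n` under preimages by elements of `H n`
  have hinvK : ∀ n, ∀ g ∈ H n, ∀ S : Set K, MeasurableSet S →
      (ν n) ((fun κ : K => g • κ) ⁻¹' S) = (ν n) S := by
    intro n g hg S hS
    have hgS : MeasurableSet ((fun κ : K => g • κ) ⁻¹' S) :=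
      (continuous_const_smul g).measurable hS
    rw [hνdef]
    simp only []
    rw [Measure.map_apply him hgS, Measure.map_apply him hS]
    have hpre : i ⁻¹' ((fun κ : K => g • κ) ⁻¹' S) = (fun x : X => g • x) ⁻¹' (i ⁻¹' S) := by
      ext x
      simp [hequiv]
    rw [hpre, Set.preimage_smul g (i ⁻¹' S)]
    exact hinv n g⁻¹ (inv_mem hg) _ (him hS)
  -- Key finite lemma: approximate fixed points for finitely many group elements
  have key : ∀ (N : ℕ) (s : Finset G), (∀ g ∈ s, g ∈ H N) → ∀ ε : ℝ, 0 < ε →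
      ∃ κ : K, ∀ g ∈ s, dist (g • κ) κ ≤ ε := by
    intro N s hs ε hε
    set ε' : ℝ := ε / 8 with hε'def
    have hε'pos : 0 < ε' := by positivity
    obtain ⟨δ, hδpos, hδ⟩ := Metric.uniformContinuous_iff.mp hi ε' hε'pos
    -- finite cover of K by ε'-balls
    obtain ⟨t, ht⟩ := isCompact_univ.elim_finite_subcover (fun c : K => ball c ε')
      (fun _ => isOpen_ball) (by
        intro x _
        exact Set.mem_iUnion.mpr ⟨x, mem_ball_self hε'pos⟩)
    have htne : t.Nonempty := by
      obtain ⟨κ0⟩ := hK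
      have := ht (Set.mem_univ κ0)
      obtain ⟨c, hct, -⟩ := Set.mem_iUnion₂.mp this
      exact ⟨c, hct⟩
    set M : ℝ := (t.card : ℝ) with hMdef
    have hM : 0 < M := by
      have h := Finset.card_pos.mpr htne
      rw [hMdef]
      exact_mod_cast h
    set β : ℝ := min (1 / (2 * M)) (1 / ((s.card : ℝ) + 2)) with hβdef
    have hβpos : 0 < β := by
      apply lt_min <;> positivity
    obtain ⟨n, hnN, hnα⟩ : ∃ n, N ≤ n ∧ concFn (μ n) δ < β :=
      ((eventually_ge_atTop N).and ((hlevy δ hδpos).eventually (gt_mem_nhds hβpos))).exists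
    set α : ℝ := concFn (μ n) δ with hαdef
    have hαM : α < 1 / M := by
      have h1 : β ≤ 1 / (2 * M) := min_le_left _ _
      have h2 : 1 / (2 * M) < 1 / M := by
        apply one_div_lt_one_div_of_lt hM
        linarith
      linarith
    have hαs : α < 1 / ((s.card : ℝ) + 2) := lt_of_lt_of_le hnα (min_le_right _ _)
    -- concentration transferred to K
    have F2 : ∀ B : Set K, MeasurableSet B → 1 / 2 ≤ ((ν n) B).toReal →
        1 - α ≤ ((ν n) (thickening ε' B)).toReal := by
      intro B hB hhalf
      have hAB : (ν n) B = (μ n) (i ⁻¹' B) := Measure.map_apply him hB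
      have h1 : 1 - α ≤ ((μ n) (thickening δ (i ⁻¹' B))).toReal := by
        refine concFn_bound (μ n) hδpos (him hB) ?_
        rwa [hAB] at hhalf
      have hsub : thickening δ (i ⁻¹' B) ⊆ i ⁻¹' (thickening ε' B) := by
        intro x hx
        obtain ⟨z, hz, hd⟩ := Metric.mem_thickening_iff.mp hx
        exact Metric.mem_thickening_iff.mpr ⟨i z, hz, hδ hd⟩
      calc 1 - α ≤ ((μ n) (thickening δ (i ⁻¹' B))).toReal := h1
        _ ≤ ((μ n) (i ⁻¹' thickening ε' B)).toReal :=
            ENNReal.toReal_mono (measure_ne_top _ _) (measure_mono hsub)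
        _ = ((ν n) (thickening ε' B)).toReal := by
            rw [Measure.map_apply him isOpen_thickening.measurableSet]
    -- some ball in the cover has mass ≥ 1/M
    obtain ⟨c, hct, hcball⟩ : ∃ c ∈ t, 1 / M ≤ ((ν n) (ball c ε')).toReal := by
      by_contra hcon
      push_neg at hcon
      have h2 : (ν n) Set.univ ≤ ∑ c ∈ t, (ν n) (ball c ε') := by
        refine le_trans (measure_mono ?_) (measure_biUnion_finset_le t _)
        intro x hx
        exact ht hx
      have h3 : (1 : ℝ) ≤ ∑ c ∈ t, ((ν n) (ball c ε')).toReal := by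
        have h4 : ((ν n) Set.univ).toReal ≤ (∑ c ∈ t, (ν n) (ball c ε')).toReal :=
          ENNReal.toReal_mono (ENNReal.sum_ne_top.mpr (fun _ _ => measure_ne_top _ _)) h2
        rw [measure_univ, ENNReal.toReal_one] at h4
        rwa [ENNReal.toReal_sum (fun _ _ => measure_ne_top _ _)] at h4
      have h5 : ∑ c ∈ t, ((ν n) (ball c ε')).toReal < ∑ _c ∈ t, 1 / M :=
        Finset.sum_lt_sum_of_nonempty htne (fun c hc => hcon c hc)
      rw [Finset.sum_const, nsmul_eq_mul, ← hMdef] at h5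
      rw [mul_one_div, div_self (ne_of_gt hM)] at h5
      linarith
    set B : Set K := ball c ε' with hBdef
    -- the ε'-thickening of B has mass > 1/2
    have hDhalf : 1 / 2 ≤ ((ν n) (thickening ε' B)).toReal := by
      by_contra hlt
      push_neg at hlt
      have hC : 1 / 2 ≤ ((ν n) (thickening ε' B)ᶜ).toReal := by
        rw [hcompl n _ isOpen_thickening.measurableSet]
        linarith
      have h5 := F2 _ isOpen_thickening.measurableSet.compl hC
      have hsub2 : thickening ε' ((thickening ε' B)ᶜ) ⊆ Bᶜ := by
        intro x hx hxB
        obtain ⟨z, hz, hd⟩ := Metric.mem_thickening_iff.mp hx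
        exact hz (Metric.mem_thickening_iff.mpr ⟨x, hxB, by rwa [dist_comm]⟩)
      have h6 : ((ν n) (thickening ε' ((thickening ε' B)ᶜ))).toReal ≤ ((ν n) Bᶜ).toReal :=
        ENNReal.toReal_mono (measure_ne_top _ _) (measure_mono hsub2)
      rw [hcompl n B measurableSet_ball] at h6
      have h7 : ((ν n) B).toReal ≤ α := by linarith
      linarith
    -- hence almost all the mass is in a small ball around c
    have hfinal : 1 - α ≤ ((ν n) (ball c (3 * ε'))).toReal := by
      have h7 := F2 _ isOpen_thickening.measurableSet hDhalf
      refine le_trans h7 (ENNReal.toReal_mono (measure_ne_top _ _) (measure_mono ?_))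
      intro x hx
      obtain ⟨y, hy, hd1⟩ := Metric.mem_thickening_iff.mp hx
      obtain ⟨z, hz, hd2⟩ := Metric.mem_thickening_iff.mp hy
      have hzc : dist z c < ε' := mem_ball.mp hz
      have : dist x c < 3 * ε' := by
        calc dist x c ≤ dist x y + dist y z + dist z c := dist_triangle4 x y z c
          _ < 3 * ε' := by linarith
      exact mem_ball.mpr this
    set r : ℝ := 3 * ε' with hrdef
    -- preimages of the small ball under elements of s also carry almost all mass
    have hW : ∀ g ∈ s, 1 - α ≤ ((ν n) ((fun κ : K => g • κ) ⁻¹' (ball c r))).toReal := by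
      intro g hg
      rw [hinvK n g (hmono hnN (hs g hg)) _ measurableSet_ball]
      exact hfinal
    -- the intersection is nonempty
    set T : Set K := ball c r ∩ ⋂ g ∈ s, (fun κ : K => g • κ) ⁻¹' (ball c r) with hTdef
    have hTne : T.Nonempty := by
      rw [Set.nonempty_iff_ne_empty]
      intro hTe
      have hcov : Set.univ ⊆ (ball c r)ᶜ ∪ ⋃ g ∈ s, ((fun κ : K => g • κ) ⁻¹' (ball c r))ᶜ := by
        intro x _
        by_contra hx
        rw [Set.mem_union] at hx
        push_neg at hx
        obtain ⟨hx1, hx2⟩ := hx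
        rw [Set.mem_compl_iff, not_not] at hx1
        have hx3 : ∀ g ∈ s, x ∈ (fun κ : K => g • κ) ⁻¹' (ball c r) := by
          intro g hg
          by_contra hxg
          exact hx2 (Set.mem_biUnion hg hxg)
        have : x ∈ T := ⟨hx1, Set.mem_biInter hx3⟩
        rw [hTe] at this
        exact this
      have hb : (ν n) Set.univ ≤ (ν n) ((ball c r)ᶜ)
          + ∑ g ∈ s, (ν n) (((fun κ : K => g • κ) ⁻¹' (ball c r))ᶜ) := by
        refine le_trans (measure_mono hcov) (le_trans (measure_union_le _ _) ?_)
        exact add_le_add_right (measure_biUnion_finset_le s _) _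
      have hb' : (1 : ℝ) ≤ ((ν n) ((ball c r)ᶜ)).toReal
          + ∑ g ∈ s, (((ν n) (((fun κ : K => g • κ) ⁻¹' (ball c r))ᶜ)).toReal) := by
        have h8 := ENNReal.toReal_mono (a := (ν n) Set.univ)
          (by
            refine ENNReal.add_ne_top.mpr ⟨measure_ne_top _ _, ?_⟩
            exact ENNReal.sum_ne_top.mpr (fun _ _ => measure_ne_top _ _)) hb
        rw [measure_univ, ENNReal.toReal_one] at h8
        rwa [ENNReal.toReal_add (measure_ne_top _ _)
          (ENNReal.sum_ne_top.mpr (fun _ _ => measure_ne_top _ _)),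
          ENNReal.toReal_sum (fun _ _ => measure_ne_top _ _)] at h8
      have hterm1 : ((ν n) ((ball c r)ᶜ)).toReal ≤ α := by
        rw [hcompl n _ measurableSet_ball]
        linarith
      have hterm2 : ∀ g ∈ s, ((ν n) (((fun κ : K => g • κ) ⁻¹' (ball c r))ᶜ)).toReal ≤ α := by
        intro g hg
        rw [hcompl n _ ((continuous_const_smul g).measurable measurableSet_ball)]
        linarith [hW g hg]
      have hsum : ∑ g ∈ s, (((ν n) (((fun κ : K => g • κ) ⁻¹' (ball c r))ᶜ)).toReal)
          ≤ (s.card : ℝ) * α := by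
        calc _ ≤ ∑ _g ∈ s, α := Finset.sum_le_sum hterm2
          _ = (s.card : ℝ) * α := by rw [Finset.sum_const, nsmul_eq_mul]
      have hcard : (0 : ℝ) ≤ (s.card : ℝ) := Nat.cast_nonneg _
      have hfin : ((s.card : ℝ) + 1) * α < 1 := by
        have h9 : ((s.card : ℝ) + 1) * α < ((s.card : ℝ) + 1) * (1 / ((s.card : ℝ) + 2)) := by
          apply mul_lt_mul_of_pos_left hαs
          linarith
        have h10 : ((s.card : ℝ) + 1) * (1 / ((s.card : ℝ) + 2)) < 1 := by
          rw [mul_one_div, div_lt_one (by linarith)]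
          linarith
        linarith
      nlinarith
    obtain ⟨κ, hκ1, hκ2⟩ := hTne
    refine ⟨κ, fun g hg => ?_⟩
    have hg1 : g • κ ∈ ball c r := by
      have := Set.mem_iInter₂.mp hκ2 g hg
      exact this
    have hb1 : dist (g • κ) c < r := mem_ball.mp hg1
    have hb2 : dist c κ < r := by
      rw [dist_comm]
      exact mem_ball.mp hκ1
    have htri : dist (g • κ) κ ≤ dist (g • κ) c + dist c κ := dist_triangle _ _ _
    have : r = 3 * (ε / 8) := by rw [hrdef, hε'def]
    linarith
  -- FIP argument on K: a point fixed by all elements of ⋃ H n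
  set D : Set G := ⋃ m, ((H m : Set G)) with hDdef
  have hfix : ∃ κ : K, ∀ g ∈ D, g • κ = κ := by
    set Z : D × ℕ → Set K := fun p => {κ : K | dist ((p.1 : G) • κ) κ ≤ 1 / ((p.2 : ℝ) + 1)}
      with hZdef
    have hZclosed : ∀ p, IsClosed (Z p) := fun p =>
      isClosed_le (Continuous.dist (continuous_const_smul _) continuous_id) continuous_const
    have hne : (Set.univ ∩ ⋂ p, Z p).Nonempty := by
      by_contra hcon
      rw [Set.not_nonempty_iff_eq_empty] at hcon
      obtain ⟨u, hu⟩ := isCompact_univ.elim_finite_subfamily_closed Z hZclosed hcon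
      -- a common subgroup index
      have hN : ∃ N : ℕ, ∀ p ∈ u, ((p.1 : G) ∈ H N) := by
        refine Finset.induction_on u ⟨0, by simp⟩ ?_
        rintro p u' _ ⟨N, hN⟩
        obtain ⟨m, hgm⟩ := Set.mem_iUnion.mp p.1.2
        refine ⟨max N m, fun q hq => ?_⟩
        rcases Finset.mem_insert.mp hq with rfl | hq'
        · exact hmono (le_max_right _ _) hgm
        · exact hmono (le_max_left _ _) (hN q hq')
      obtain ⟨N, hN⟩ := hN
      set m0 : ℕ := u.sup (fun p => p.2) with hm0def
      set ε0 : ℝ := 1 / ((m0 : ℝ) + 1) with hε0def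
      have hε0pos : 0 < ε0 := by positivity
      set s : Finset G := u.image (fun p => (p.1 : G)) with hsdef
      have hsmem : ∀ g ∈ s, g ∈ H N := by
        intro g hg
        obtain ⟨p, hp, rfl⟩ := Finset.mem_image.mp hg
        exact hN p hp
      obtain ⟨κ, hκ⟩ := key N s hsmem ε0 hε0pos
      have hκZ : κ ∈ Set.univ ∩ ⋂ p ∈ u, Z p := by
        refine ⟨Set.mem_univ κ, Set.mem_iInter₂.mpr (fun p hp => ?_)⟩
        have h1 : dist ((p.1 : G) • κ) κ ≤ ε0 :=
          hκ _ (Finset.mem_image.mpr ⟨p, hp, rfl⟩)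
        have h2 : ε0 ≤ 1 / ((p.2 : ℝ) + 1) := by
          rw [hε0def]
          apply one_div_le_one_div_of_le (by positivity)
          have : p.2 ≤ m0 := Finset.le_sup hp
          have : (p.2 : ℝ) ≤ (m0 : ℝ) := by exact_mod_cast this
          linarith
        exact le_trans h1 h2
      rw [hu] at hκZ
      exact hκZ
    obtain ⟨κ, -, hκ⟩ := hne
    refine ⟨κ, fun g hg => ?_⟩
    have hd : ∀ m : ℕ, dist (g • κ) κ ≤ 1 / ((m : ℝ) + 1) := by
      intro m
      exact Set.mem_iInter.mp hκ (⟨g, hg⟩, m)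
    have hd0 : dist (g • κ) κ ≤ 0 := by
      by_contra hpos
      push_neg at hpos
      obtain ⟨m, hm⟩ := exists_nat_one_div_lt hpos
      exact absurd (hd m) (not_le.mpr hm)
    exact eq_of_dist_eq_zero (le_antisymm hd0 dist_nonneg)
  obtain ⟨κ, hκ⟩ := hfix
  refine ⟨κ, fun g => ?_⟩
  have hcl : IsClosed {g : G | g • κ = κ} :=
    isClosed_eq (continuous_id.smul continuous_const) continuous_const
  have hsub : closure D ⊆ {g : G | g • κ = κ} :=
    hcl.closure_subset_iff.mpr (fun g hg => hκ g hg)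
  have : g ∈ closure D := by
    rw [hdense.closure_eq]
    trivial
  exact hsub this
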